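/- Let n ≥ 1, let x, x' ∈ ([0,1]² × {−1,1})^n, and fix distinct indices i, j ∈ {1,…,n}. For S ⊆ {i,j} let x^S denote the configuration obtained from x by replacing its coordinates in positions belonging to S by the corresponding coordinates of x'. Assume that each of the four configurations x, x^{{i}}, x^{{j}}, x^{{i,j}} has pairwise distinct first components and pairwise distinct second components, and that in each of these four configurations the x-ranks of the points in positions i and j differ by at least 2 and their y-ranks differ by at least 2. Let f denote the map assigning to such a configuration y the number f(y) = des(π̃(y)) + des(π̃(y)^{-1}), where π̃(y) ∈ B_n is the signed permutation associated to y. Then f(x) − f(x^{{j}}) = f(x^{{i}}) − f(x^{{i,j}}). -/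

import Mathlib

open MeasureTheory ProbabilityTheory Filter Finset Topology

noncomputable section

/-- The index set `{-n, …, -1, 1, …, n}` on which signed permutations of rank `n` act. -/
abbrev SIdx (n : ℕ) := {i : ℤ // i ≠ 0 ∧ |i| ≤ (n : ℤ)}

instance SIdx.fintype (n : ℕ) : Fintype (SIdx n) :=
  Fintype.ofFinset ((Finset.Icc (-(n : ℤ)) (n : ℤ)).filter fun i => i ≠ 0)
    (by intro i; change _ ↔ (i ≠ 0 ∧ |i| ≤ (n : ℤ)); simp only [Finset.mem_filter, Finset.mem_Icc, abs_le]; omega)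

instance (n : ℕ) : Neg (SIdx n) :=
  ⟨fun i => ⟨-i.1, by
    obtain ⟨h1, h2⟩ := i.2; exact ⟨neg_ne_zero.mpr h1, by simpa [abs_neg] using h2⟩⟩⟩

@[simp] lemma SIdx.neg_val {n : ℕ} (i : SIdx n) : (-i).1 = -i.1 := rfl

/-- A permutation of `{-n, …, -1, 1, …, n}` is a signed permutation iff it is antisymmetric,
i.e. `π(-i) = -π(i)` for all `i`. -/
def IsSignedPerm (n : ℕ) (π : Equiv.Perm (SIdx n)) : Prop := ∀ i, π (-i) = -(π i)

instance (n : ℕ) : DecidablePred (IsSignedPerm n) :=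
  fun π => inferInstanceAs (Decidable (∀ i, π (-i) = -(π i)))

/-- The hyperoctahedral group `B_n`, i.e. the group of signed permutations of rank `n`. -/
abbrev BGroup (n : ℕ) := {π : Equiv.Perm (SIdx n) // IsSignedPerm n π}

instance (n : ℕ) : Nonempty (BGroup n) := ⟨⟨1, fun _ => rfl⟩⟩

/-- The value `π(j)` of a signed permutation in one-line notation (set to `0` outside the
domain; in particular `valAt n π 0 = 0`, matching the type-`B` convention `π(0) = 0`). -/
def valAt (n : ℕ) (π : Equiv.Perm (SIdx n)) (j : ℤ) : ℤ :=
  if h : j ≠ 0 ∧ |j| ≤ (n : ℤ) then (π ⟨j, h⟩).1 else 0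

/-- The descent number of a signed permutation (type-`B` convention `π(0) = 0`):
`des(π) = #{0 ≤ i ≤ n-1 : π(i) > π(i+1)}`. -/
def desB (n : ℕ) (π : Equiv.Perm (SIdx n)) : ℕ :=
  ((Finset.range n).filter fun i : ℕ => valAt n π ((i : ℤ) + 1) < valAt n π ((i : ℤ))).card

/-- Expectation of a statistic with respect to the uniform distribution on a finite set. -/
def expec {α : Type*} [Fintype α] (f : α → ℝ) : ℝ := (∑ x, f x) / (Fintype.card α)

/-- Variance of a statistic with respect to the uniform distribution on a finite set. -/
def varU {α : Type*} [Fintype α] (f : α → ℝ) : ℝ := expec fun x => (f x - expec f) ^ 2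

/-- The law of a real-valued statistic under the uniform distribution, as a probability
measure on `ℝ`. -/
def unifLaw {α : Type*} [Fintype α] [Nonempty α] (f : α → ℝ) : ProbabilityMeasure ℝ :=
  ⟨((PMF.uniformOfFintype α).map f).toMeasure, inferInstance⟩

/-- The standard normal distribution `N(0,1)` as a probability measure on `ℝ`. -/
def stdGaussianPM : ProbabilityMeasure ℝ := ⟨gaussianReal 0 1, inferInstance⟩

/-- The x-rank of the `i`-th point of a configuration: the position of `uᵢ` when the first
coordinates are sorted in ascending order. -/
def xrank {n : ℕ} (x : Fin n → ℝ × ℝ × Bool) (i : Fin n) : ℕ :=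
  (Finset.univ.filter fun j : Fin n => (x j).1 ≤ (x i).1).card

/-- The y-rank of the `i`-th point of a configuration: the position of `vᵢ` when the second
coordinates are sorted in ascending order. -/
def yrank {n : ℕ} (x : Fin n → ℝ × ℝ × Bool) (i : Fin n) : ℕ :=
  (Finset.univ.filter fun j : Fin n => (x j).2.1 ≤ (x i).2.1).card

/-- The sign of the `i`-th point (`true` codes `+1`). -/
def bsgn {n : ℕ} (x : Fin n → ℝ × ℝ × Bool) (i : Fin n) : ℤ :=
  if (x i).2.2 then 1 else -1

/-- The configuration lies in `([0,1]² × {±1})ⁿ`. -/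
def InRange {n : ℕ} (x : Fin n → ℝ × ℝ × Bool) : Prop :=
  ∀ i, (x i).1 ∈ Set.Icc (0 : ℝ) 1 ∧ (x i).2.1 ∈ Set.Icc (0 : ℝ) 1

/-- The first coordinates of the configuration are pairwise distinct, and so are the
second coordinates. -/
def DistinctCoords {n : ℕ} (x : Fin n → ℝ × ℝ × Bool) : Prop :=
  (∀ i j, i ≠ j → (x i).1 ≠ (x j).1) ∧ ∀ i j, i ≠ j → (x i).2.1 ≠ (x j).2.1

/-- `P` is the signed permutation associated to the configuration `x`: it is antisymmetric,
and for every point the value of `P` at the point's x-rank is its sign times its y-rank. -/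
def AssocSigned {n : ℕ} (x : Fin n → ℝ × ℝ × Bool) (P : Equiv.Perm (SIdx n)) : Prop :=
  IsSignedPerm n P ∧ ∀ i : Fin n, valAt n P (xrank x i) = bsgn x i * (yrank x i)

/-- The statistic `f = des(π̃) + des(π̃⁻¹)`. -/
def fstat (n : ℕ) (P : Equiv.Perm (SIdx n)) : ℤ := (desB n P : ℤ) + (desB n P⁻¹ : ℤ)

/-- The x-ranks of the points in positions `i` and `j` differ by at least `2`, and so do
their y-ranks. -/
def RankGap {n : ℕ} (x : Fin n → ℝ × ℝ × Bool) (i j : Fin n) : Prop :=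
  2 ≤ |(xrank x i : ℤ) - (xrank x j : ℤ)| ∧ 2 ≤ |(yrank x i : ℤ) - (yrank x j : ℤ)|

/-! Read along increasing x-rank, `des π̃(y)` counts the points `q` whose signed y-rank is smaller
than that of the point `p` just before `q` in the order of the `u`-coordinates, where a virtual
point of value `0` stands before the first one (this is `π(0) = 0`). Comparing the signed y-ranks
of two points needs only the two points, so whether such a pair is counted depends only on `y p`,
`y q` and on which points lie between them; moreover
`[q follows p] = [nothing but possibly j lies between p and q] - [p, j, q are consecutive]`.
The first term does not depend on `y j`; since `i` and `j` are never adjacent, the second one takes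
the same value on `x` and `x^{i}`, and on `x^{j}` and `x^{ij}`. So every term has vanishing mixed
difference. Exchanging the two coordinates of every point turns `π̃` into `π̃⁻¹`, which handles
`des π̃⁻¹` in the same way. -/

open Function

section IsNext

variable {κ β : Type*} [LinearOrder β] {w w' : κ → β} {i j k p q : κ}

def IsNext (w : κ → β) (p q : κ) : Prop :=
  w p < w q ∧ ∀ r, ¬(w p < w r ∧ w r < w q)

def IsNextExcept (w : κ → β) (k p q : κ) : Prop :=
  w p < w q ∧ ∀ r, r ≠ k → ¬(w p < w r ∧ w r < w q)

lemma not_isNext_of_isNext_of_isNext (hpk : IsNext w p k) (hkq : IsNext w k q) :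
    ¬IsNext w p q :=
  fun h => h.2 k ⟨hpk.1, hkq.1⟩

lemma isNextExcept_iff (hw : Injective w) :
    IsNextExcept w k p q ↔ IsNext w p q ∨ (IsNext w p k ∧ IsNext w k q) := by
  constructor
  · rintro ⟨hpq, hr⟩
    by_cases hk : w p < w k ∧ w k < w q
    · refine Or.inr ⟨⟨hk.1, fun r hr' => ?_⟩, ⟨hk.2, fun r hr' => ?_⟩⟩
      · exact hr r (fun h => (h ▸ hr'.2).false) ⟨hr'.1, hr'.2.trans hk.2⟩
      · exact hr r (fun h => (h ▸ hr'.1).false) ⟨hk.1.trans hr'.1, hr'.2⟩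
    · refine Or.inl ⟨hpq, fun r => ?_⟩
      by_cases h : r = k
      exacts [h ▸ hk, hr r h]
  · rintro (h | ⟨hpk, hkq⟩)
    · exact ⟨h.1, fun r _ => h.2 r⟩
    · refine ⟨hpk.1.trans hkq.1, fun r hrk hr => ?_⟩
      rcases lt_trichotomy (w r) (w k) with hlt | heq | hgt
      · exact hpk.2 r ⟨hr.1, hlt⟩
      · exact hrk (hw heq)
      · exact hkq.2 r ⟨hgt, hr.2⟩

lemma isNextExcept_congr (hw : ∀ r, r ≠ k → w' r = w r) (hp : p ≠ k) (hq : q ≠ k) :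
    IsNextExcept w' k p q ↔ IsNextExcept w k p q := by
  unfold IsNextExcept
  rw [hw p hp, hw q hq]
  exact and_congr_right' (forall₂_congr fun r hr => by rw [hw r hr])

lemma isNext_congr (hw : ∀ r, r ≠ k → w' r = w r) (hinj : Injective w) (hinj' : Injective w')
    (hp : p ≠ k) (hq : q ≠ k) (h : ¬(IsNext w p k ∧ IsNext w k q))
    (h' : ¬(IsNext w' p k ∧ IsNext w' k q)) : IsNext w' p q ↔ IsNext w p q := by
  have := isNextExcept_congr hw hp hq
  rw [isNextExcept_iff hinj, isNextExcept_iff hinj'] at this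
  tauto

def NonAdjacent (w : κ → β) (i j : κ) : Prop :=
  Injective w ∧ ¬IsNext w i j ∧ ¬IsNext w j i

lemma NonAdjacent.symm (h : NonAdjacent w i j) : NonAdjacent w j i :=
  ⟨h.1, h.2.2, h.2.1⟩

end IsNext

section Rank

variable {κ β : Type*} [Fintype κ] [LinearOrder β] {w : κ → β} {p q : κ}

def rank (w : κ → β) (q : κ) : ℕ := #{r | w r < w q}

lemma rank_lt_rank_iff : rank w p < rank w q ↔ w p < w q := by
  refine ⟨fun h => not_le.mp fun hqp => h.not_ge (card_le_card ?_), fun h => card_lt_card ?_⟩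
  · intro r; simpa using fun hr => hr.trans_le hqp
  · refine ⟨fun r => by simpa using fun hr => hr.trans h, fun hsub => ?_⟩
    simpa using hsub (by simpa using h : p ∈ univ.filter fun r => w r < w q)

lemma rank_injective (hw : Injective w) : Injective (rank w) := by
  intro p q h
  by_contra hpq
  rcases (hw.ne hpq).lt_or_gt with hlt | hlt
  · exact (rank_lt_rank_iff.mpr hlt).ne h
  · exact (rank_lt_rank_iff.mpr hlt).ne' h

lemma rank_lt_card (q : κ) : rank w q < Fintype.card κ :=
  card_lt_univ_of_notMem (x := q) (by simp)

lemma image_rank (hw : Injective w) : univ.image (rank w) = range (Fintype.card κ) :=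
  eq_of_subset_of_card_le (fun a ha => by
      obtain ⟨q, -, rfl⟩ := mem_image.mp ha
      exact mem_range.mpr (rank_lt_card q))
    (by rw [card_image_of_injective _ (rank_injective hw), card_range, card_univ])

lemma isNext_iff_rank (hw : Injective w) : IsNext w p q ↔ rank w q = rank w p + 1 := by
  classical
  constructor
  · rintro ⟨hpq, hr⟩
    have : univ.filter (fun r => w r < w q) = insert p (univ.filter fun r => w r < w p) := by
      ext r
      simp only [mem_filter, mem_univ, true_and, mem_insert]
      refine ⟨fun hrq => ?_, ?_⟩
      · rcases lt_trichotomy (w r) (w p) with hlt | heq | hgt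
        · exact Or.inr hlt
        · exact Or.inl (hw heq)
        · exact (hr r ⟨hgt, hrq⟩).elim
      · rintro (rfl | hrp)
        exacts [hpq, hrp.trans hpq]
    rw [rank, this, card_insert_of_notMem (by simp)]
    rfl
  · intro h
    refine ⟨rank_lt_rank_iff.mp (by omega), fun r hr => ?_⟩
    have h1 := rank_lt_rank_iff.mpr hr.1
    have h2 := rank_lt_rank_iff.mpr hr.2
    omega

lemma card_filter_le_eq_rank_add_one (hw : Injective w) (q : κ) :
    #{r | w r ≤ w q} = rank w q + 1 := by
  classical
  have : univ.filter (fun r => w r ≤ w q) = insert q (univ.filter fun r => w r < w q) := by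
    ext r
    simp only [mem_filter, mem_univ, true_and, mem_insert, le_iff_lt_or_eq, hw.eq_iff]
    tauto
  rw [this, card_insert_of_notMem (by simp), rank]

end Rank

section NextIndicator

variable {κ γ β : Type*} [LinearOrder β] {pos : γ → β} {R : γ → γ → Prop} {z : κ → γ} {i j p q : κ}

open Classical in
def nextIndicator (pos : γ → β) (R : γ → γ → Prop) (z : κ → γ) (p q : κ) : ℤ :=
  if IsNext (pos ∘ z) p q ∧ R (z p) (z q) then 1 else 0

open Classical in
lemma nextIndicator_eq_sub (hz : Injective (pos ∘ z)) (k : κ) :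
    nextIndicator pos R z p q =
      (if IsNextExcept (pos ∘ z) k p q ∧ R (z p) (z q) then 1 else 0) -
        (if (IsNext (pos ∘ z) p k ∧ IsNext (pos ∘ z) k q) ∧ R (z p) (z q) then 1 else 0) := by
  have := not_isNext_of_isNext_of_isNext (w := pos ∘ z) (p := p) (q := q) (k := k)
  unfold nextIndicator
  rw [isNextExcept_iff hz]
  split_ifs <;> tauto

lemma nextIndicator_eq_zero (h : NonAdjacent (pos ∘ z) i j)
    (hpq : (p = i ∧ q = j) ∨ (p = j ∧ q = i)) : nextIndicator pos R z p q = 0 := by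
  rcases hpq with ⟨rfl, rfl⟩ | ⟨rfl, rfl⟩
  · exact if_neg fun hc => h.2.1 hc.1
  · exact if_neg fun hc => h.2.2 hc.1

end NextIndicator

section Square

variable {ι κ α γ : Type*} [DecidableEq ι] [DecidableEq κ]

def SquareEq (F : (κ → γ) → ℤ) (z z' : κ → γ) (i j : κ) : Prop :=
  F z - F (update z j (z' j)) =
    F (update z i (z' i)) - F (update (update z i (z' i)) j (z' j))

variable {F G : (κ → γ) → ℤ} {z z' : κ → γ} {i j : κ}

lemma SquareEq.symm (h : SquareEq F z z' j i) (hij : i ≠ j) : SquareEq F z z' i j := by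
  unfold SquareEq at *
  rw [update_comm hij]
  linarith

lemma SquareEq.add (hF : SquareEq F z z' i j) (hG : SquareEq G z z' i j) :
    SquareEq (fun y => F y + G y) z z' i j := by
  unfold SquareEq at *
  linarith

lemma SquareEq.sum {τ : Type*} (s : Finset τ) {F : τ → (κ → γ) → ℤ}
    (h : ∀ t ∈ s, SquareEq (F t) z z' i j) : SquareEq (fun y => ∑ t ∈ s, F t y) z z' i j := by
  unfold SquareEq at *
  simp only [← sum_sub_distrib]
  exact sum_congr rfl h

lemma SquareEq.comp {F : (κ → γ) → ℤ} {L : (ι → α) → κ → γ} {e : ι → κ} {z z' : ι → α}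
    {i j : ι} (hL : ∀ y k, L (update y k (z' k)) = update (L y) (e k) (L z' (e k)))
    (h : SquareEq F (L z) (L z') (e i) (e j)) : SquareEq (F ∘ L) z z' i j := by
  unfold SquareEq at *
  simpa only [comp_apply, hL] using h

variable {β : Type*} [LinearOrder β] {pos : γ → β} {R : γ → γ → Prop} {p q : κ}

lemma squareEq_nextIndicator_of_ne (hij : i ≠ j) (hp : p ≠ j) (hq : q ≠ j)
    (h00 : NonAdjacent (pos ∘ z) i j) (h01 : NonAdjacent (pos ∘ update z j (z' j)) i j)
    (h10 : NonAdjacent (pos ∘ update z i (z' i)) i j)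
    (h11 : NonAdjacent (pos ∘ update (update z i (z' i)) j (z' j)) i j) :
    SquareEq (fun y => nextIndicator pos R y p q) z z' i j := by
  classical
  set E : (κ → γ) → ℤ := fun y =>
    if IsNextExcept (pos ∘ y) j p q ∧ R (y p) (y q) then 1 else 0
  set G : (κ → γ) → ℤ := fun y =>
    if (IsNext (pos ∘ y) p j ∧ IsNext (pos ∘ y) j q) ∧ R (y p) (y q) then 1 else 0
  have hE : ∀ y a, E (update y j a) = E y := fun y a => by
    simp only [E, update_of_ne hp, update_of_ne hq, isNextExcept_congr (w' := pos ∘ update y j a)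
      (w := pos ∘ y) (fun r hr => by simp [update_of_ne hr]) hp hq]
  have hG : ∀ y, NonAdjacent (pos ∘ y) i j → NonAdjacent (pos ∘ update y i (z' i)) i j →
      G (update y i (z' i)) = G y := fun y hy hy' => by
    by_cases hpi : p = i
    · subst hpi
      simp only [G, hy.2.1, hy'.2.1, false_and]
    by_cases hqi : q = i
    · subst hqi
      simp only [G, hy.2.2, hy'.2.2, and_false, false_and]
    have hw : ∀ r, r ≠ i → (pos ∘ update y i (z' i)) r = (pos ∘ y) r :=
      fun r hr => by simp [update_of_ne hr]
    simp only [G, update_of_ne hpi, update_of_ne hqi,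
      isNext_congr hw hy.1 hy'.1 hpi hij.symm (fun h => hy.2.1 h.2) (fun h => hy'.2.1 h.2),
      isNext_congr hw hy.1 hy'.1 hij.symm hqi (fun h => hy.2.2 h.1) (fun h => hy'.2.2 h.1)]
  have hG₁ := hG (update z j (z' j)) h01 (by rwa [update_comm hij.symm])
  rw [update_comm hij.symm] at hG₁
  unfold SquareEq
  beta_reduce
  rw [nextIndicator_eq_sub h00.1 j, nextIndicator_eq_sub h01.1 j, nextIndicator_eq_sub h10.1 j,
    nextIndicator_eq_sub h11.1 j]
  have hE₀ := hE z (z' j)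
  have hE₁ := hE (update z i (z' i)) (z' j)
  have hG₀ := hG z h00 h10
  simp only [E, G] at hE₀ hE₁ hG₀ hG₁
  linarith

lemma squareEq_nextIndicator (hij : i ≠ j)
    (h00 : NonAdjacent (pos ∘ z) i j) (h01 : NonAdjacent (pos ∘ update z j (z' j)) i j)
    (h10 : NonAdjacent (pos ∘ update z i (z' i)) i j)
    (h11 : NonAdjacent (pos ∘ update (update z i (z' i)) j (z' j)) i j) (p q : κ) :
    SquareEq (fun y => nextIndicator pos R y p q) z z' i j := by
  by_cases hj : p ≠ j ∧ q ≠ j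
  · exact squareEq_nextIndicator_of_ne hij hj.1 hj.2 h00 h01 h10 h11
  by_cases hi : p ≠ i ∧ q ≠ i
  · refine (squareEq_nextIndicator_of_ne hij.symm hi.1 hi.2 h00.symm h10.symm h01.symm ?_).symm hij
    rw [update_comm hij.symm]
    exact h11.symm
  have hpq : (p = i ∧ q = j) ∨ (p = j ∧ q = i) := by
    by_cases hpi : p = i <;> simp_all
  simp only [SquareEq, nextIndicator_eq_zero h00 hpq, nextIndicator_eq_zero h01 hpq,
    nextIndicator_eq_zero h10 hpq, nextIndicator_eq_zero h11 hpq]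

end Square

section SignedPerm

variable {n : ℕ} {Q : Equiv.Perm (SIdx n)}

lemma valAt_zero (Q : Equiv.Perm (SIdx n)) : valAt n Q 0 = 0 := by
  simp [valAt]

lemma valAt_val (Q : Equiv.Perm (SIdx n)) (c : SIdx n) : valAt n Q c.1 = (Q c).1 :=
  dif_pos c.2

lemma valAt_inv_valAt {a : ℤ} (ha : a ≠ 0 ∧ |a| ≤ n) : valAt n Q⁻¹ (valAt n Q a) = a := by
  rw [show valAt n Q a = (Q ⟨a, ha⟩).1 from dif_pos ha, valAt_val]
  simp

lemma IsSignedPerm.inv (hQ : IsSignedPerm n Q) : IsSignedPerm n Q⁻¹ := fun c =>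
  Q.injective (by rw [hQ]; simp)

lemma IsSignedPerm.valAt_neg (hQ : IsSignedPerm n Q) (a : ℤ) : valAt n Q (-a) = -valAt n Q a := by
  by_cases ha : a ≠ 0 ∧ |a| ≤ n
  · have := valAt_val Q (-⟨a, ha⟩)
    rw [hQ, SIdx.neg_val, SIdx.neg_val] at this
    rw [this, valAt, dif_pos ha]
  · have ha' : ¬(-a ≠ 0 ∧ |-a| ≤ n) := by rwa [abs_neg, neg_ne_zero]
    rw [valAt, dif_neg ha', valAt, dif_neg ha, neg_zero]

lemma IsSignedPerm.valAt_mul_sign (hQ : IsSignedPerm n Q) {s : ℤ} (hs : s = 1 ∨ s = -1)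
    (a : ℤ) : valAt n Q (s * a) = s * valAt n Q a := by
  rcases hs with rfl | rfl
  · simp
  · simp [hQ.valAt_neg]

end SignedPerm

lemma natCast_card_filter_range_eq_sum (n : ℕ) (Q : ℕ → ℕ → Prop) [DecidableRel Q] :
    (#{a ∈ range n | Q a (a + 1)} : ℤ) =
      ∑ a ∈ range (n + 1), ∑ b ∈ range (n + 1), if b = a + 1 ∧ Q a b then 1 else 0 := by
  simp only [ite_and, sum_ite_eq', mem_range, natCast_card_filter]
  rw [sum_range_succ, if_neg (by omega), add_zero]
  exact sum_congr rfl fun a ha => by rw [if_pos (show a + 1 < n + 1 by simp at ha; omega)]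

section Configuration

variable {n : ℕ} {y : Fin n → ℝ × ℝ × Bool} {P : Equiv.Perm (SIdx n)} {i j p q : Fin n}

lemma DistinctCoords.injective_fst (hd : DistinctCoords y) : Injective fun p => (y p).1 :=
  fun a b h => by_contra fun hab => hd.1 a b hab h

lemma DistinctCoords.injective_snd (hd : DistinctCoords y) : Injective fun p => (y p).2.1 :=
  fun a b h => by_contra fun hab => hd.2 a b hab h

lemma xrank_eq_rank_add_one (hd : DistinctCoords y) (p : Fin n) :
    xrank y p = rank (fun r => (y r).1) p + 1 :=
  card_filter_le_eq_rank_add_one hd.injective_fst p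

lemma yrank_eq_rank_add_one (hd : DistinctCoords y) (p : Fin n) :
    yrank y p = rank (fun r => (y r).2.1) p + 1 :=
  card_filter_le_eq_rank_add_one hd.injective_snd p

def signedKey (c : ℝ × ℝ × Bool) : ℝ := (if c.2.2 then 1 else -1) * Real.exp c.2.1

lemma signedKey_lt_signedKey_iff (hd : DistinctCoords y) :
    signedKey (y q) < signedKey (y p) ↔ bsgn y q * yrank y q < bsgn y p * yrank y p := by
  have hlt : ∀ a b, yrank y a < yrank y b ↔ Real.exp (y a).2.1 < Real.exp (y b).2.1 := by
    intro a b
    rw [yrank_eq_rank_add_one hd, yrank_eq_rank_add_one hd, Real.exp_lt_exp, add_lt_add_iff_right]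
    exact rank_lt_rank_iff
  have hp := Real.exp_pos (y p).2.1
  have hq := Real.exp_pos (y q).2.1
  have hp' : 0 < yrank y p := by rw [yrank_eq_rank_add_one hd]; omega
  have hq' : 0 < yrank y q := by rw [yrank_eq_rank_add_one hd]; omega
  unfold signedKey bsgn
  by_cases hbp : (y p).2.2 <;> by_cases hbq : (y q).2.2 <;>
    simp only [hbp, hbq, if_true, if_false, one_mul, neg_one_mul, neg_lt_neg_iff, Nat.cast_lt,
      Bool.false_eq_true]
  exacts [(hlt q p).symm, iff_of_true (by linarith) (by omega),
    iff_of_false (by linarith) (by omega), (hlt p q).symm]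

-- `none` is a virtual point below all others with key `0`: it stands for `π(0) = 0`. The key
-- `± exp v` of a point orders points as their signed y-ranks do, but depends on the point alone.
def liftConfig (y : Fin n → ℝ × ℝ × Bool) : Option (Fin n) → Option (ℝ × ℝ × Bool) :=
  fun o => o.map y

def liftPos : Option (ℝ × ℝ × Bool) → WithBot ℝ
  | none => ⊥
  | some c => c.1

def liftKey : Option (ℝ × ℝ × Bool) → ℝ
  | none => 0
  | some c => signedKey c

lemma liftConfig_update (y : Fin n → ℝ × ℝ × Bool) (k : Fin n) (a : ℝ × ℝ × Bool) :
    liftConfig (update y k a) = update (liftConfig y) (some k) (some a) := by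
  funext o
  rcases o with _ | r
  · rfl
  · by_cases hr : r = k
    · subst hr; simp [liftConfig]
    · simp [liftConfig, update_of_ne hr, update_of_ne (Option.some_injective _ |>.ne hr)]

lemma injective_liftPos_comp (hd : DistinctCoords y) : Injective (liftPos ∘ liftConfig y) := by
  rintro (_ | a) (_ | b) h
  · rfl
  · exact absurd h WithBot.bot_ne_coe
  · exact absurd h WithBot.coe_ne_bot
  · exact congrArg some (hd.injective_fst (WithBot.coe_injective h))

lemma rank_liftPos_none : rank (liftPos ∘ liftConfig y) none = 0 := by
  simp [rank, liftPos, liftConfig]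

lemma rank_liftPos_some (hd : DistinctCoords y) (p : Fin n) :
    rank (liftPos ∘ liftConfig y) (some p) = xrank y p := by
  rw [xrank_eq_rank_add_one hd, rank, card_filter, Fintype.sum_option, rank, card_filter]
  simp [liftPos, liftConfig, add_comm]

lemma nonAdjacent_liftPos (hd : DistinctCoords y) (hg : RankGap y i j) :
    NonAdjacent (liftPos ∘ liftConfig y) (some i) (some j) := by
  have hw := injective_liftPos_comp hd
  refine ⟨hw, ?_, ?_⟩ <;>
  · rw [isNext_iff_rank hw, rank_liftPos_some hd, rank_liftPos_some hd]
    have := le_abs'.mp hg.1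
    omega

def desConfig (y : Fin n → ℝ × ℝ × Bool) : ℤ :=
  ∑ p, ∑ q, nextIndicator liftPos (fun c d => liftKey d < liftKey c) (liftConfig y) p q

lemma squareEq_desConfig {x x' : Fin n → ℝ × ℝ × Bool} (hij : i ≠ j)
    (hd : DistinctCoords x) (hdi : DistinctCoords (update x i (x' i)))
    (hdj : DistinctCoords (update x j (x' j)))
    (hdij : DistinctCoords (update (update x i (x' i)) j (x' j)))
    (hg : RankGap x i j) (hgi : RankGap (update x i (x' i)) i j)
    (hgj : RankGap (update x j (x' j)) i j)
    (hgij : RankGap (update (update x i (x' i)) j (x' j)) i j) :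
    SquareEq desConfig x x' i j := by
  have hL : ∀ y k, liftConfig (update y k (x' k)) =
      update (liftConfig y) (some k) (liftConfig x' (some k)) :=
    fun y k => liftConfig_update y k (x' k)
  refine SquareEq.comp (F := fun z => ∑ p, ∑ q, nextIndicator liftPos _ z p q) hL ?_
  refine SquareEq.sum _ fun p _ => SquareEq.sum _ fun q _ => ?_
  refine squareEq_nextIndicator (Option.some_injective _ |>.ne hij)
    (nonAdjacent_liftPos hd hg) ?_ ?_ ?_ p q <;> simp only [← hL]
  exacts [nonAdjacent_liftPos hdj hgj, nonAdjacent_liftPos hdi hgi, nonAdjacent_liftPos hdij hgij]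

lemma bsgn_eq_one_or (y : Fin n → ℝ × ℝ × Bool) (p : Fin n) : bsgn y p = 1 ∨ bsgn y p = -1 := by
  unfold bsgn
  split_ifs <;> simp

lemma xrank_mem_domain (y : Fin n → ℝ × ℝ × Bool) (p : Fin n) :
    (xrank y p : ℤ) ≠ 0 ∧ |(xrank y p : ℤ)| ≤ n := by
  have : 1 ≤ xrank y p := card_pos.mpr ⟨p, by simp⟩
  have : xrank y p ≤ n := (card_filter_le _ _).trans (by simp)
  rw [abs_of_nonneg (by positivity)]
  omega

def swapUV (c : ℝ × ℝ × Bool) : ℝ × ℝ × Bool := (c.2.1, c.1, c.2.2)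

lemma DistinctCoords.swapUV (hd : DistinctCoords y) : DistinctCoords (swapUV ∘ y) :=
  ⟨hd.2, hd.1⟩

lemma RankGap.swapUV (hg : RankGap y i j) : RankGap (swapUV ∘ y) i j :=
  ⟨hg.2, hg.1⟩

lemma AssocSigned.swapUV (hP : AssocSigned y P) : AssocSigned (swapUV ∘ y) P⁻¹ := by
  refine ⟨hP.1.inv, fun p => ?_⟩
  change valAt n P⁻¹ (yrank y p) = bsgn y p * xrank y p
  have hs := bsgn_eq_one_or y p
  have h := valAt_inv_valAt (Q := P) (xrank_mem_domain y p)
  rw [hP.2 p, hP.1.inv.valAt_mul_sign hs] at h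
  rw [← h, ← mul_assoc]
  rcases hs with hs | hs <;> simp [hs]

lemma liftKey_lt_liftKey_iff (hd : DistinctCoords y) (hP : AssocSigned y P)
    (p q : Option (Fin n)) :
    liftKey (liftConfig y q) < liftKey (liftConfig y p) ↔
      valAt n P (rank (liftPos ∘ liftConfig y) q) <
        valAt n P (rank (liftPos ∘ liftConfig y) p) := by
  have hv : ∀ r, valAt n P (rank (liftPos ∘ liftConfig y) (some r)) = bsgn y r * yrank y r :=
    fun r => by rw [rank_liftPos_some hd]; exact hP.2 r
  have hsign : ∀ r, (signedKey (y r) < 0 ↔ bsgn y r * yrank y r < 0) ∧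
      (0 < signedKey (y r) ↔ 0 < bsgn y r * yrank y r) := fun r => by
    have := Real.exp_pos (y r).2.1
    have : 0 < yrank y r := by rw [yrank_eq_rank_add_one hd]; omega
    unfold signedKey bsgn
    by_cases hb : (y r).2.2 <;> simp only [hb, if_true, if_false, Bool.false_eq_true] <;>
      refine ⟨⟨?_, ?_⟩, ⟨?_, ?_⟩⟩ <;> intro <;> linarith
  rcases p with _ | p <;> rcases q with _ | q <;>
    simp only [liftConfig, liftKey, Option.map_none, Option.map_some, rank_liftPos_none,
      Nat.cast_zero, valAt_zero, hv, lt_irrefl, signedKey_lt_signedKey_iff hd, (hsign _).1,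
      (hsign _).2]

lemma desB_eq_desConfig (hd : DistinctCoords y) (hP : AssocSigned y P) :
    (desB n P : ℤ) = desConfig y := by
  classical
  have hw := injective_liftPos_comp hd
  have himage : range (n + 1) = univ.image (rank (liftPos ∘ liftConfig y)) := by
    rw [image_rank hw, Fintype.card_option, Fintype.card_fin]
  calc (desB n P : ℤ)
      = ∑ a ∈ range (n + 1), ∑ b ∈ range (n + 1),
          if b = a + 1 ∧ valAt n P b < valAt n P a then 1 else 0 := by
        rw [desB, ← natCast_card_filter_range_eq_sum]
        push_cast
        rfl
    _ = desConfig y := by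
        rw [himage, sum_image (rank_injective hw).injOn]
        refine sum_congr rfl fun p _ => ?_
        rw [sum_image (rank_injective hw).injOn]
        refine sum_congr rfl fun q _ => ?_
        rw [nextIndicator, isNext_iff_rank hw, liftKey_lt_liftKey_iff hd hP]
        congr

lemma fstat_eq_desConfig (hd : DistinctCoords y) (hP : AssocSigned y P) :
    fstat n P = desConfig y + desConfig (swapUV ∘ y) := by
  rw [fstat, desB_eq_desConfig hd hP, desB_eq_desConfig hd.swapUV hP.swapUV]

lemma squareEq_desConfig_swapUV {x x' : Fin n → ℝ × ℝ × Bool} (hij : i ≠ j)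
    (hd : DistinctCoords x) (hdi : DistinctCoords (update x i (x' i)))
    (hdj : DistinctCoords (update x j (x' j)))
    (hdij : DistinctCoords (update (update x i (x' i)) j (x' j)))
    (hg : RankGap x i j) (hgi : RankGap (update x i (x' i)) i j)
    (hgj : RankGap (update x j (x' j)) i j)
    (hgij : RankGap (update (update x i (x' i)) j (x' j)) i j) :
    SquareEq (fun y => desConfig (swapUV ∘ y)) x x' i j := by
  have hL : ∀ y k, swapUV ∘ update y k (x' k) = update (swapUV ∘ y) k ((swapUV ∘ x') k) :=
    fun y k => comp_update swapUV y k (x' k)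
  refine SquareEq.comp (F := desConfig) hL ?_
  refine squareEq_desConfig hij hd.swapUV ?_ ?_ ?_ hg.swapUV ?_ ?_ ?_ <;> simp only [← hL]
  exacts [hdi.swapUV, hdj.swapUV, hdij.swapUV, hgi.swapUV, hgj.swapUV, hgij.swapUV]

end Configuration

theorem stmt14_general (n : ℕ) (x x' : Fin n → ℝ × ℝ × Bool) (i j : Fin n) (hij : i ≠ j)
    (hd : DistinctCoords x)
    (hdi : DistinctCoords (Function.update x i (x' i)))
    (hdj : DistinctCoords (Function.update x j (x' j)))
    (hdij : DistinctCoords (Function.update (Function.update x i (x' i)) j (x' j)))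
    (hgap : RankGap x i j)
    (hgapi : RankGap (Function.update x i (x' i)) i j)
    (hgapj : RankGap (Function.update x j (x' j)) i j)
    (hgapij : RankGap (Function.update (Function.update x i (x' i)) j (x' j)) i j)
    (P Pi Pj Pij : Equiv.Perm (SIdx n))
    (hP : AssocSigned x P)
    (hPi : AssocSigned (Function.update x i (x' i)) Pi)
    (hPj : AssocSigned (Function.update x j (x' j)) Pj)
    (hPij : AssocSigned (Function.update (Function.update x i (x' i)) j (x' j)) Pij) :
    fstat n P - fstat n Pj = fstat n Pi - fstat n Pij := by
  rw [fstat_eq_desConfig hd hP, fstat_eq_desConfig hdj hPj, fstat_eq_desConfig hdi hPi,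
    fstat_eq_desConfig hdij hPij]
  exact (squareEq_desConfig hij hd hdi hdj hdij hgap hgapi hgapj hgapij).add
    (squareEq_desConfig_swapUV hij hd hdi hdj hdij hgap hgapi hgapj hgapij)

/-- The graphical rule joining `i` and `j` when their x-ranks or y-ranks
differ by at most `1` is an interaction rule for `f = des(π̃(·)) + des(π̃(·)⁻¹)`: if in all
four configurations `x`, `x^{i}`, `x^{j}`, `x^{ij}` the ranks of positions `i` and `j` are
at least `2` apart, then `f(x) - f(x^{j}) = f(x^{i}) - f(x^{ij})`. -/
theorem stmt14 (n : ℕ) (x x' : Fin n → ℝ × ℝ × Bool) (i j : Fin n) (hij : i ≠ j)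
    (hx : InRange x) (hx' : InRange x')
    (hd : DistinctCoords x)
    (hdi : DistinctCoords (Function.update x i (x' i)))
    (hdj : DistinctCoords (Function.update x j (x' j)))
    (hdij : DistinctCoords (Function.update (Function.update x i (x' i)) j (x' j)))
    (hgap : RankGap x i j)
    (hgapi : RankGap (Function.update x i (x' i)) i j)
    (hgapj : RankGap (Function.update x j (x' j)) i j)
    (hgapij : RankGap (Function.update (Function.update x i (x' i)) j (x' j)) i j)
    (P Pi Pj Pij : Equiv.Perm (SIdx n))
    (hP : AssocSigned x P)
    (hPi : AssocSigned (Function.update x i (x' i)) Pi)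
    (hPj : AssocSigned (Function.update x j (x' j)) Pj)
    (hPij : AssocSigned (Function.update (Function.update x i (x' i)) j (x' j)) Pij) :
    fstat n P - fstat n Pj = fstat n Pi - fstat n Pij :=
  stmt14_general n x x' i j hij hd hdi hdj hdij hgap hgapi hgapj hgapij P Pi Pj Pij hP hPi hPj hPij
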